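/- Let n ≥ 3, ε > 0, v_ε as above, and V a smooth vector field on ℝⁿ₊ with Vₙ = 0 and ∂ₙV_a = 0 on ∂ℝⁿ₊, with S_{ik} = ∂ᵢVₖ + ∂ₖVᵢ − (2/n)(div V)δ_{ik} satisfying ∂ₙS_{nn} = 2n·v_ε^(2/(n−2))·S_{nn} on ∂ℝⁿ₊. Then for all a, b = 1,…,n−1 and x ∈ ∂ℝⁿ₊: ∂ₙS_{ab}(x) = −(2n/(n−1)) · v_ε(x)^(2/(n-2)) · S_{nn}(x) · δ_{ab}. -/

import Mathlib

open scoped BigOperators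
open MeasureTheory

noncomputable section

abbrev E (n : ℕ) := EuclideanSpace ℝ (Fin n)

/-- Partial derivative in the `i`-th coordinate direction. -/
def pder {n : ℕ} (i : Fin n) (f : E n → ℝ) (x : E n) : ℝ :=
  fderiv ℝ f x (EuclideanSpace.single i 1)

/-- Euclidean Laplacian. -/
def lap {n : ℕ} (f : E n → ℝ) (x : E n) : ℝ :=
  ∑ i, pder i (pder i f) x

/-- The index of the last ("normal") coordinate `x_n`. -/
def nIdx (n : ℕ) (hn : 0 < n) : Fin n := ⟨n - 1, Nat.sub_lt hn one_pos⟩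

/-- The model function `v_ε` on the upper half-space. -/
def vE (n : ℕ) (hn : 0 < n) (ε : ℝ) (x : E n) : ℝ :=
  ε ^ (((n : ℝ) - 2) / 2) *
    ((ε + x (nIdx n hn)) ^ 2 + ∑ a ∈ Finset.univ.erase (nIdx n hn), x a ^ 2) ^
      (-(((n : ℝ) - 2) / 2))

/-- Divergence of a vector field. -/
def divV {n : ℕ} (V : E n → E n) (x : E n) : ℝ := ∑ i, pder i (fun z => V z i) x

/-- The conformal Killing operator `S_{ik} = ∂ᵢVₖ + ∂ₖVᵢ - (2/n)(div V)δ_{ik}`. -/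
def Smat {n : ℕ} (V : E n → E n) (i k : Fin n) (x : E n) : ℝ :=
  pder i (fun z => V z k) x + pder k (fun z => V z i) x -
    (2 / (n : ℝ)) * divV V x * (if i = k then 1 else 0)

/-- The correction term `ψ = Σ_l ∂_l v_ε · V_l + ((n-2)/(2n)) v_ε div V`. -/
def psiF (n : ℕ) (hn : 0 < n) (ε : ℝ) (V : E n → E n) (x : E n) : ℝ :=
  ∑ l, pder l (vE n hn ε) x * V x l +
    (((n : ℝ) - 2) / (2 * n)) * vE n hn ε x * divV V x

lemma contDiff_pder {n : ℕ} (j : Fin n) {f : E n → ℝ} (hf : ContDiff ℝ (⊤ : ℕ∞) f) :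
    ContDiff ℝ (⊤ : ℕ∞) (pder j f) := by
  have h1 : ContDiff ℝ (⊤ : ℕ∞) (fderiv ℝ f) := hf.fderiv_right (by simp)
  exact (ContinuousLinearMap.apply ℝ ℝ (EuclideanSpace.single j 1)).contDiff.comp h1

lemma pder_swap {n : ℕ} (i j : Fin n) {f : E n → ℝ} (hf : ContDiff ℝ (⊤ : ℕ∞) f) (x : E n) :
    pder i (pder j f) x = pder j (pder i f) x := by
  have hd : Differentiable ℝ f := hf.differentiable (by simp)
  have hd' : Differentiable ℝ (fderiv ℝ f) := (hf.fderiv_right (m := (⊤ : ℕ∞)) (by simp)).differentiable (by simp)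
  have hsym := second_derivative_symmetric (f := f) (f' := fderiv ℝ f)
    (f'' := fderiv ℝ (fderiv ℝ f) x) (fun y => (hd y).hasFDerivAt) (hd' x).hasFDerivAt
  have key : ∀ v w : E n, fderiv ℝ (fun y => fderiv ℝ f y w) x v
      = fderiv ℝ (fderiv ℝ f) x v w := by
    intro v w
    have := fderiv_clm_apply (c := fderiv ℝ f) (u := fun _ => w) (hd' x)
      (differentiableAt_const w)
    simp only [fderiv_const, fderiv_const_apply, Pi.zero_apply, ContinuousLinearMap.comp_zero, zero_add] at this
    rw [show (fun y => fderiv ℝ f y w) = fun y => (fderiv ℝ f y) ((fun _ : E n => w) y) from rfl,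
      this]
    rfl
  show fderiv ℝ (fun y => fderiv ℝ f y (EuclideanSpace.single j 1)) x (EuclideanSpace.single i 1)
    = fderiv ℝ (fun y => fderiv ℝ f y (EuclideanSpace.single i 1)) x (EuclideanSpace.single j 1)
  rw [key, key, hsym]

lemma pder_boundary_zero {n : ℕ} (hn : 0 < n) {g : E n → ℝ}
    (hg : Differentiable ℝ g) {a : Fin n} (ha : a ≠ nIdx n hn)
    (hbd : ∀ y : E n, y (nIdx n hn) = 0 → g y = 0)
    {x : E n} (hx : x (nIdx n hn) = 0) : pder a g x = 0 := by
  set v := EuclideanSpace.single a (1:ℝ) with hv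
  have hφ : HasDerivAt (fun t : ℝ => x + t • v) v 0 := by
    simpa using ((hasDerivAt_id (0:ℝ)).smul_const v).const_add x
  have hgx : HasFDerivAt g (fderiv ℝ g x) (x + (0:ℝ) • v) := by
    simpa using (hg x).hasFDerivAt
  have hcomp : HasDerivAt (fun t : ℝ => g (x + t • v)) (fderiv ℝ g x v) 0 := by
    simpa [Function.comp_def] using hgx.comp_hasDerivAt (0:ℝ) hφ
  have hzero : (fun t : ℝ => g (x + t • v)) = fun _ => 0 := by
    funext t
    apply hbd
    have : v (nIdx n hn) = 0 := by
      rw [hv, EuclideanSpace.single_apply]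
      simp [Ne.symm ha]
    simp [PiLp.add_apply, PiLp.smul_apply, hx, this]
  rw [hzero] at hcomp
  have := hcomp.unique (hasDerivAt_const 0 0)
  simpa [pder] using this

lemma pder_sum_univ {n : ℕ} (i : Fin n) (f : Fin n → E n → ℝ) (x : E n)
    (hf : ∀ l, DifferentiableAt ℝ (f l) x) :
    pder i (fun z => ∑ l, f l z) x = ∑ l, pder i (f l) x := by
  unfold pder
  rw [fderiv_fun_sum (fun l _ => hf l)]
  simp [ContinuousLinearMap.sum_apply]

theorem main_aux (n : ℕ) (hn3 : 3 ≤ n) (hn : 0 < n) (c : E n → ℝ)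
    (V : E n → E n) (hV : ContDiff ℝ (⊤ : ℕ∞) V)
    (hVa : ∀ (x : E n) (a : Fin n), a ≠ nIdx n hn →
      x (nIdx n hn) = 0 → pder (nIdx n hn) (fun z => V z a) x = 0)
    (hSnn : ∀ x : E n, x (nIdx n hn) = 0 →
      pder (nIdx n hn) (Smat V (nIdx n hn) (nIdx n hn)) x =
        c x * Smat V (nIdx n hn) (nIdx n hn) x) :
    ∀ (a b : Fin n), a ≠ nIdx n hn → b ≠ nIdx n hn →
      ∀ x : E n, x (nIdx n hn) = 0 →
        pder (nIdx n hn) (Smat V a b) x =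
          -(1 / ((n : ℝ) - 1)) * (c x * Smat V (nIdx n hn) (nIdx n hn) x) *
            (if a = b then 1 else 0) := by
  intro a b ha hb x hx
  set N := nIdx n hn with hNdef
  have hVi : ∀ i : Fin n, ContDiff ℝ (⊤ : ℕ∞) (fun z => V z i) := by
    intro i
    have := ((EuclideanSpace.proj i : E n →L[ℝ] ℝ)).contDiff.comp hV
    simpa [Function.comp_def] using this
  have hmix : ∀ i j : Fin n, ContDiff ℝ (⊤ : ℕ∞) (pder i (fun z => V z j)) := fun i j =>
    contDiff_pder i (hVi j)
  have hdivC : ContDiff ℝ (⊤ : ℕ∞) (divV V) := by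
    unfold divV
    exact ContDiff.sum fun l _ => hmix l l
  -- mixed second derivatives vanish
  have key : ∀ i j : Fin n, i ≠ N → j ≠ N →
      pder N (pder i (fun z => V z j)) x = 0 := by
    intro i j hi hj
    rw [pder_swap N i (hVi j) x]
    exact pder_boundary_zero hn ((hmix N j).differentiable (by simp)) hi
      (fun y hy => hVa y j hj hy) hx
  set D := pder N (pder N (fun z => V z N)) x with hDdef
  have hdiv : pder N (divV V) x = D := by
    unfold divV
    rw [pder_sum_univ N _ x (fun l => ((hmix l l).differentiable (by simp)).differentiableAt)]
    rw [Finset.sum_eq_single_of_mem N (Finset.mem_univ N)]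
    intro l _ hl
    exact key l l hl hl
  -- expansion of pder N (Smat V i k) x
  have hexp : ∀ i k : Fin n, pder N (Smat V i k) x =
      pder N (pder i (fun z => V z k)) x + pder N (pder k (fun z => V z i)) x -
        (2 / (n : ℝ)) * pder N (divV V) x * (if i = k then 1 else 0) := by
    intro i k
    have h1 : DifferentiableAt ℝ (pder i (fun z => V z k)) x :=
      ((hmix i k).differentiable (by simp)).differentiableAt
    have h2 : DifferentiableAt ℝ (pder k (fun z => V z i)) x :=
      ((hmix k i).differentiable (by simp)).differentiableAt
    have h3 : DifferentiableAt ℝ (divV V) x := (hdivC.differentiable (by simp)).differentiableAt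
    have h3' : DifferentiableAt ℝ (fun z => (2 / (n : ℝ)) * divV V z) x := h3.const_mul _
    have : pder N (Smat V i k) x = fderiv ℝ (fun z =>
        (pder i (fun z' => V z' k) z + pder k (fun z' => V z' i) z) -
        ((2 / (n : ℝ)) * divV V z) * (if i = k then 1 else 0)) x
        (EuclideanSpace.single N 1) := by
      unfold pder Smat
      congr 1
    rw [this, fderiv_fun_sub (h1.fun_add h2) (h3'.mul_const _), fderiv_fun_add h1 h2,
      fderiv_mul_const h3' ((if i = k then (1:ℝ) else 0)), fderiv_const_mul h3 ((2:ℝ)/(n:ℝ))]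
    unfold pder
    simp only [ContinuousLinearMap.sub_apply, ContinuousLinearMap.add_apply,
      ContinuousLinearMap.smul_apply, smul_eq_mul]
    ring
  -- Snn relation gives D
  have hne1 : (n : ℝ) ≠ 0 := by positivity
  have hne2 : (n : ℝ) - 1 ≠ 0 := by
    have : (3 : ℝ) ≤ (n : ℝ) := by exact_mod_cast hn3
    linarith
  have hSnnX := hSnn x hx
  rw [hexp N N, hdiv] at hSnnX
  simp only [if_pos rfl, if_true, mul_one, ← hDdef] at hSnnX
  -- hSnnX : D + D - 2/n * D = c x * Smat V N N x
  have hD : D = (n : ℝ) / (2 * ((n : ℝ) - 1)) * (c x * Smat V N N x) := by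
    field_simp at hSnnX ⊢
    linarith
  rw [hexp a b, hdiv, key a b ha hb, key b a hb ha, hD]
  field_simp
  split_ifs <;> ring

/-- Boundary equation for the tangential components `∂ₙ S_{ab}`. -/
theorem dn_Sab_boundary (n : ℕ) (hn : 3 ≤ n) (ε : ℝ) (hε : 0 < ε)
    (V : E n → E n) (hV : ContDiff ℝ (⊤ : ℕ∞) V)
    (hVn : ∀ x : E n, x (nIdx n (by omega)) = 0 → V x (nIdx n (by omega)) = 0)
    (hVa : ∀ (x : E n) (a : Fin n), a ≠ nIdx n (by omega) →
      x (nIdx n (by omega)) = 0 → pder (nIdx n (by omega)) (fun z => V z a) x = 0)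
    (hSnn : ∀ x : E n, x (nIdx n (by omega)) = 0 →
      pder (nIdx n (by omega)) (Smat V (nIdx n (by omega)) (nIdx n (by omega))) x =
        2 * (n : ℝ) * vE n (by omega) ε x ^ ((2 : ℝ) / ((n : ℝ) - 2)) *
          Smat V (nIdx n (by omega)) (nIdx n (by omega)) x) :
    ∀ (a b : Fin n), a ≠ nIdx n (by omega) → b ≠ nIdx n (by omega) →
      ∀ x : E n, x (nIdx n (by omega)) = 0 →
        pder (nIdx n (by omega)) (Smat V a b) x =
          -(2 * (n : ℝ) / ((n : ℝ) - 1)) * vE n (by omega) ε x ^ ((2 : ℝ) / ((n : ℝ) - 2)) *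
            Smat V (nIdx n (by omega)) (nIdx n (by omega)) x *
            (if a = b then 1 else 0) := by
  intro a b ha hb x hx
  have hn0 : 0 < n := by omega
  have h := main_aux n hn hn0
    (fun y => 2 * (n : ℝ) * vE n hn0 ε y ^ ((2 : ℝ) / ((n : ℝ) - 2))) V hV
    (fun y a' ha' hy => hVa y a' ha' hy)
    (fun y hy => hSnn y hy)
    a b ha hb x hx
  rw [h]
  ring
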